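/- Let ξ ∈ Sh(p,q) and K ⊆ [q]. The map τ_ξ defined by τ_ξ(u × v) = (u × v)ξ⁻¹ is a convex embedding of B_p × B_{q,K} (the set {u × v : u ∈ B_p, v ∈ B_q, Nega(v) = K} with the weak order induced from B_{p+q}) into B_{p+q} with the weak order; in particular, this restriction preserves all meets and joins that exist. -/

import Mathlib

open Finset

open scoped Classical

/-- The hyperoctahedral group `𝔅ₙ`, realized as the set of those permutations `w` of `ℤ`
that satisfy `w (-i) = - w i` for all `i` and fix every integer of absolute value `> n`.
One-line notation: `w₁ ⋯ w_n` with `w_i = w i` for `1 ≤ i ≤ n`. -/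
def SignedPerm (n : ℕ) : Set (Equiv.Perm ℤ) :=
  {w | (∀ i : ℤ, w (-i) = - w i) ∧ (∀ i : ℤ, (n : ℤ) < |i| → w i = i)}

/-- The inversion set `Inv(w) = {(i,j) : 1 ≤ i < j ≤ n, w_i > w_j}`. -/
noncomputable def InvSet (n : ℕ) (w : Equiv.Perm ℤ) : Finset (ℤ × ℤ) :=
  ((Finset.Icc (1 : ℤ) (n : ℤ)) ×ˢ (Finset.Icc (1 : ℤ) (n : ℤ))).filter
    fun p => p.1 < p.2 ∧ w p.2 < w p.1

/-- The set of negative indices `Nega(w) = {i ∈ [n] : w_i < 0}`. -/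
noncomputable def NegaSet (n : ℕ) (w : Equiv.Perm ℤ) : Finset ℤ :=
  (Finset.Icc (1 : ℤ) (n : ℤ)).filter fun i => w i < 0

/-- The negative sum pair set `Nsp(w) = {(i,j) : 1 ≤ i < j ≤ n, w_i + w_j < 0}`. -/
noncomputable def NspSet (n : ℕ) (w : Equiv.Perm ℤ) : Finset (ℤ × ℤ) :=
  ((Finset.Icc (1 : ℤ) (n : ℤ)) ×ˢ (Finset.Icc (1 : ℤ) (n : ℤ))).filter
    fun p => p.1 < p.2 ∧ w p.1 + w p.2 < 0

/-- The Coxeter length of `w ∈ 𝔅ₙ`: `ℓ(w) = #Inv(w) + #Nega(w) + #Nsp(w)`. -/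
noncomputable def blen (n : ℕ) (w : Equiv.Perm ℤ) : ℕ :=
  (InvSet n w).card + (NegaSet n w).card + (NspSet n w).card

/-- The left weak order on `𝔅ₙ`: `u ≤ v` iff `ℓ(v) = ℓ(u) + ℓ(v * u⁻¹)`. -/
def wle (n : ℕ) (u v : Equiv.Perm ℤ) : Prop :=
  blen n v = blen n u + blen n (v * u⁻¹)

/-- The Coxeter generators of `𝔅ₙ`: `s₀ = (1,-1)` and `sᵢ = (i,i+1)(-i,-(i+1))` for `i ≥ 1`. -/
def sB (i : ℕ) : Equiv.Perm ℤ :=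
  if i = 0 then Equiv.swap 1 (-1)
  else Equiv.swap (i : ℤ) ((i : ℤ) + 1) * Equiv.swap (-(i : ℤ)) (-((i : ℤ) + 1))

/-- `a[p] = a + p` if `a > 0`, `a - p` if `a < 0` (and `0 ↦ 0`). -/
def shiftFun (p : ℕ) (b : ℤ) : ℤ :=
  if 0 < b then b + (p : ℤ) else if b < 0 then b - (p : ℤ) else 0

/-- `w` is the shifted product `u × v ∈ 𝔅_{p+q}` of `u ∈ 𝔅_p` and `v ∈ 𝔅_q`:
its one-line notation is `(u₁, …, u_p, v₁[p], …, v_q[p])`. -/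
def IsSProd (p q : ℕ) (u v w : Equiv.Perm ℤ) : Prop :=
  w ∈ SignedPerm (p + q) ∧
  (∀ a : ℤ, 1 ≤ a → a ≤ (p : ℤ) → w a = u a) ∧
  (∀ a : ℤ, (p : ℤ) < a → a ≤ (p : ℤ) + (q : ℤ) → w a = shiftFun p (v (a - (p : ℤ))))

/-- `ξ` is a `(p,q)`-shuffle: an element of `𝔅_{p+q}` with positive entries (a permutation)
that is increasing on each of the blocks `[1,p]` and `[p+1,p+q]`. -/
def IsShuffle (p q : ℕ) (ξ : Equiv.Perm ℤ) : Prop :=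
  ξ ∈ SignedPerm (p + q) ∧
  (∀ a : ℤ, 1 ≤ a → a ≤ (p : ℤ) + (q : ℤ) → 0 < ξ a) ∧
  (∀ a b : ℤ, 1 ≤ a → a < b → b ≤ (p : ℤ) → ξ a < ξ b) ∧
  (∀ a b : ℤ, (p : ℤ) < a → a < b → b ≤ (p : ℤ) + (q : ℤ) → ξ a < ξ b)

/-- `w` is the standard signed permutation `sts(a₁ ⋯ a_m)` of the word `a₁ ⋯ a_m = a 1, …, a m`
(of nonzero integers): the unique `w ∈ 𝔅_m` with the same negative index set and
`|w_i| < |w_j| ↔ |a_i| ≤ |a_j|` for `1 ≤ i < j ≤ m`. -/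
def IsSts (m : ℕ) (a : ℤ → ℤ) (w : Equiv.Perm ℤ) : Prop :=
  w ∈ SignedPerm m ∧
  (∀ i : ℤ, 1 ≤ i → i ≤ (m : ℤ) → (w i < 0 ↔ a i < 0)) ∧
  (∀ i j : ℤ, 1 ≤ i → i < j → j ≤ (m : ℤ) → (|w i| < |w j| ↔ |a i| ≤ |a j|))

/-- The standard signed permutation of a word, as a function. -/
noncomputable def sts (m : ℕ) (a : ℤ → ℤ) : Equiv.Perm ℤ :=
  if h : ∃ w, IsSts m a w then h.choose else 1

/-- Descent set of `w ∈ 𝔅ₙ`: `Des(w) = {i ∈ [0,n-1] : w_i > w_{i+1}}` with `w₀ = 0`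
(note `w 0 = 0` holds automatically). -/
def DesSet (n : ℕ) (w : Equiv.Perm ℤ) : Finset ℕ :=
  (Finset.range n).filter fun i => w ((i : ℤ) + 1) < w (i : ℤ)

/-- Global descent set of `u ∈ 𝔅ₙ`. -/
noncomputable def GDesSet (n : ℕ) (u : Equiv.Perm ℤ) : Finset ℕ :=
  (Finset.Ico 1 n).filter fun i =>
    ∀ j k : ℤ, 1 ≤ j → j ≤ (i : ℤ) → (i : ℤ) < k → k ≤ (n : ℤ) → u k < u j

/-- `m` is the meet (greatest lower bound) of `x` and `y` within `S`, w.r.t. the weak order. -/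
def IsMeetIn (n : ℕ) (S : Set (Equiv.Perm ℤ)) (x y m : Equiv.Perm ℤ) : Prop :=
  m ∈ S ∧ wle n m x ∧ wle n m y ∧ ∀ z ∈ S, wle n z x → wle n z y → wle n z m

/-- `j` is the join (least upper bound) of `x` and `y` within `S`, w.r.t. the weak order. -/
def IsJoinIn (n : ℕ) (S : Set (Equiv.Perm ℤ)) (x y j : Equiv.Perm ℤ) : Prop :=
  j ∈ S ∧ wle n x j ∧ wle n y j ∧ ∀ z ∈ S, wle n x z → wle n y z → wle n j z

/-- The set `𝔅_p × 𝔅_{q,K} ⊆ 𝔅_{p+q}` of shifted products `u × v` with `u ∈ 𝔅_p`,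
`v ∈ 𝔅_q`, `Nega(v) = K`. -/
def SProdComp (p q : ℕ) (K : Finset ℤ) : Set (Equiv.Perm ℤ) :=
  {w | ∃ u v : Equiv.Perm ℤ, u ∈ SignedPerm p ∧ v ∈ SignedPerm q ∧ NegaSet q v = K ∧
        IsSProd p q u v w}

/-- `w` is the iterated shifted product `u⁽¹⁾ × ⋯ × u⁽ᵏ⁾` of the list `us` of signed
permutations with block sizes given by the list `ps`. -/
def IsMultiSProd (ps : List ℕ) (us : List (Equiv.Perm ℤ)) (w : Equiv.Perm ℤ) : Prop :=
  w ∈ SignedPerm ps.sum ∧ us.length = ps.length ∧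
  ∀ i < ps.length,
    us.getD i 1 ∈ SignedPerm (ps.getD i 0) ∧
    ∀ a : ℤ, ((ps.take i).sum : ℤ) < a → a ≤ ((ps.take i).sum : ℤ) + (ps.getD i 0 : ℤ) →
      w a = shiftFun ((ps.take i).sum) ((us.getD i 1) (a - ((ps.take i).sum : ℤ)))

/-- The subset `𝔅_{p₁} × 𝔅_{p₂} × ⋯ × 𝔅_{p_k}` of `𝔅_{p₁+⋯+p_k}`. -/
def MultiProdSet (ps : List ℕ) : Set (Equiv.Perm ℤ) :=
  {w | ∃ us, IsMultiSProd ps us w}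

/-- The `(L₂,…,L_k)`-component `𝔅_{p₁} × 𝔅_{p₂,L₂} × ⋯ × 𝔅_{p_k,L_k}`, where
`Ls.getD (i-1) ∅` is the prescribed negative index set of the `(i+1)`-st factor. -/
def ComponentSet (ps : List ℕ) (Ls : List (Finset ℤ)) : Set (Equiv.Perm ℤ) :=
  {w | ∃ us, IsMultiSProd ps us w ∧
        ∀ i, 1 ≤ i → i < ps.length →
          NegaSet (ps.getD i 0) (us.getD i 1) = Ls.getD (i - 1) ∅}

/-- `ξ ∈ Sh(p₁,…,p_k)`: a permutation in `𝔅_{p₁+⋯+p_k}` (all entries positive)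
increasing on each consecutive block. -/
def IsMultiShuffle (ps : List ℕ) (ξ : Equiv.Perm ℤ) : Prop :=
  ξ ∈ SignedPerm ps.sum ∧
  (∀ a : ℤ, 1 ≤ a → a ≤ (ps.sum : ℤ) → 0 < ξ a) ∧
  ∀ i < ps.length, ∀ a b : ℤ,
    ((ps.take i).sum : ℤ) < a → a < b → b ≤ ((ps.take i).sum : ℤ) + (ps.getD i 0 : ℤ) →
      ξ a < ξ b

/-!
For signed permutations, `wle n u v` holds exactly when every inversion of `u` (a pair
`a < b` in `[-n, n]` with `u b < u a`) is an inversion of `v`, because `ℓ(v u⁻¹)` counts the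
pairs on which `u` and `v` disagree; right multiplication by `ξ⁻¹` merely reorders the positions
through `ξ`.

The component `𝔅_p × 𝔅_{q,K}` consists of the signed permutations that are strictly monotone
along `blockClass p K`, which sends a position to the sign shared there by the whole component
(or to `0` on `[-p, p]`). Its elements agree on every pair of positions in different classes,
and `ξ` preserves the order of two positions in the same class, so the reordering by `ξ` is
invisible on the component: this is the order embedding. By the same token anything between
two elements of the image is class-monotone, which is convexity. For meets and joins, an
arbitrary `z` is compared with its projection to the component, which orders positions first
by class and then by the values of `z ξ`.
-/

section InversionOrder

variable {α β γ δ : Type*} [LinearOrder β] [LinearOrder γ] [LinearOrder δ]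
  {R : Set α} {σ τ : α → γ} {c : α → δ} {u v w x z W : α → β}

/-- Every inversion of `u` is one of `v`, where the positions in `R` are ordered through `σ`. -/
def InvSubset (R : Set α) (σ : α → γ) (u v : α → β) : Prop :=
  ∀ s ∈ R, ∀ t ∈ R, σ s < σ t → u t < u s → v t < v s

def ClassMonoOn (R : Set α) (c : α → δ) (w : α → β) : Prop :=
  ∀ s ∈ R, ∀ t ∈ R, c s < c t → w s < w t

theorem ClassMonoOn.lt_iff_lt (h : ClassMonoOn R c w) (hc : Set.InjOn c R) {s t : α}
    (hs : s ∈ R) (ht : t ∈ R) : w s < w t ↔ c s < c t := by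
  refine ⟨fun hw => ?_, h s hs t ht⟩
  rcases lt_trichotomy (c s) (c t) with hst | hst | hst
  · exact hst
  · exact absurd hw (by rw [hc hs ht hst]; exact lt_irrefl _)
  · exact absurd (h t ht s hs hst) (lt_asymm hw)

theorem ClassMonoOn.injOn (h : ClassMonoOn R c w) (hc : Set.InjOn c R) : Set.InjOn w R := by
  intro s hs t ht hw
  apply hc hs ht
  rcases lt_trichotomy (c s) (c t) with hst | hst | hst
  · exact absurd hw (h s hs t ht hst).ne
  · exact hst
  · exact absurd hw (h t ht s hs hst).ne'

theorem InvSubset.trans (huv : InvSubset R σ u v) (hvw : InvSubset R σ v w) :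
    InvSubset R σ u w :=
  fun s hs t ht hst h => hvw s hs t ht hst (huv s hs t ht hst h)

/-- Across classes the relative order of class-monotone maps is prescribed, so only the order of
positions within a class matters. -/
theorem InvSubset.of_classMonoOn (hu : ClassMonoOn R c u) (hv : ClassMonoOn R c v)
    (hστ : ∀ s ∈ R, ∀ t ∈ R, c s = c t → τ s < τ t → σ s < σ t) (h : InvSubset R σ u v) :
    InvSubset R τ u v := by
  intro s hs t ht hst hut
  rcases lt_trichotomy (c s) (c t) with hc | hc | hc
  · exact absurd (hu s hs t ht hc) (lt_asymm hut)
  · exact h s hs t ht (hστ s hs t ht hc hst) hut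
  · exact hv t ht s hs hc

theorem ClassMonoOn.of_invSubset (ha : ClassMonoOn R c u) (hb : ClassMonoOn R c v)
    (hσ : Set.InjOn σ R) (hw : Set.InjOn w R) (h₁ : InvSubset R σ u w)
    (h₂ : InvSubset R σ w v) : ClassMonoOn R c w := by
  intro s hs t ht hc
  have hst : s ≠ t := fun h => (h ▸ hc).false
  by_contra hwst
  have hwts : w t < w s := lt_of_le_of_ne (not_lt.1 hwst) fun h => hst (hw hs ht h.symm)
  rcases lt_trichotomy (σ s) (σ t) with hσst | hσst | hσst
  · exact lt_asymm (hb s hs t ht hc) (h₂ s hs t ht hσst hwts)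
  · exact hst (hσ hs ht hσst)
  · exact lt_asymm hwts (h₁ t ht s hs hσst (ha s hs t ht hc))

theorem InvSubset.lex_of_le
    (hz : ∀ s ∈ R, ∀ t ∈ R, z s < z t ↔ c s < c t ∨ c s = c t ∧ W s < W t)
    (hx : ClassMonoOn R c x) (h : InvSubset R σ W x) :
    InvSubset R σ W z ∧ InvSubset R σ z x := by
  constructor
  · intro s hs t ht hst hW
    rcases lt_trichotomy (c s) (c t) with hc | hc | hc
    · exact absurd (hx s hs t ht hc) (lt_asymm (h s hs t ht hst hW))
    · exact (hz t ht s hs).2 (Or.inr ⟨hc.symm, hW⟩)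
    · exact (hz t ht s hs).2 (Or.inl hc)
  · intro s hs t ht hst hzts
    rcases (hz t ht s hs).1 hzts with hc | ⟨-, hW⟩
    · exact hx t ht s hs hc
    · exact h s hs t ht hst hW

theorem InvSubset.lex_of_ge
    (hz : ∀ s ∈ R, ∀ t ∈ R, z s < z t ↔ c s < c t ∨ c s = c t ∧ W s < W t)
    (hx : ClassMonoOn R c x) (h : InvSubset R σ x W) :
    InvSubset R σ z W ∧ InvSubset R σ x z := by
  constructor
  · intro s hs t ht hst hzts
    rcases (hz t ht s hs).1 hzts with hc | ⟨-, hW⟩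
    · exact h s hs t ht hst (hx t ht s hs hc)
    · exact hW
  · intro s hs t ht hst hxts
    rcases lt_trichotomy (c s) (c t) with hc | hc | hc
    · exact absurd (hx s hs t ht hc) (lt_asymm hxts)
    · exact (hz t ht s hs).2 (Or.inr ⟨hc.symm, h s hs t ht hst hxts⟩)
    · exact (hz t ht s hs).2 (Or.inl hc)

end InversionOrder

section Rank

variable {α β : Type*} [LinearOrder β] {I : Finset α} {f : α → β} {s t : α}

theorem card_filter_lt_lt_card_filter_lt (hs : s ∈ I) (hst : f s < f t) :
    #(I.filter fun u => f u < f s) < #(I.filter fun u => f u < f t) := by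
  refine card_lt_card ((ssubset_iff_of_subset fun u hu => ?_).2 ⟨s, by simp [hs, hst]⟩)
  simp only [mem_filter] at hu ⊢
  exact ⟨hu.1, hu.2.trans hst⟩

theorem card_filter_lt_add_card_filter_gt (hf : Set.InjOn f I) (hs : s ∈ I) :
    #(I.filter fun u => f u < f s) + #(I.filter fun u => f s < f u) + 1 = #I := by
  rw [← card_union_of_disjoint (disjoint_filter.2 fun _ _ h h' => lt_asymm h h'),
    ← card_erase_add_one hs]
  congr 2
  ext u
  simp only [mem_union, mem_filter, mem_erase]
  constructor
  · rintro (⟨hu, h⟩ | ⟨hu, h⟩) <;> exact ⟨fun hus => by simp [hus] at h, hu⟩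
  · rintro ⟨hus, hu⟩
    rcases lt_trichotomy (f u) (f s) with h | h | h
    · exact Or.inl ⟨hu, h⟩
    · exact absurd (hf hu hs h) hus
    · exact Or.inr ⟨hu, h⟩

end Rank

/-- Each inversion of `w ∈ 𝔅ₙ` appears here twice, as `(a, b)` and as `(-b, -a)`. -/
noncomputable def invPairs (n : ℕ) (w : Equiv.Perm ℤ) : Finset (ℤ × ℤ) :=
  (Icc (-(n : ℤ)) n ×ˢ Icc (-(n : ℤ)) n).filter
    fun r => r.1 < r.2 ∧ r.1 + r.2 ≠ 0 ∧ w r.2 < w r.1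

namespace SignedPerm

variable {n p : ℕ} {u v w σ W : Equiv.Perm ℤ} {f c : ℤ → ℤ}

theorem apply_zero (hw : w ∈ SignedPerm n) : w 0 = 0 := by
  have h := hw.1 0
  rw [neg_zero] at h
  omega

theorem mul_mem (hu : u ∈ SignedPerm n) (hv : v ∈ SignedPerm n) : u * v ∈ SignedPerm n :=
  ⟨fun i => by simp only [Equiv.Perm.mul_apply, hv.1 i, hu.1],
    fun i hi => by simp only [Equiv.Perm.mul_apply, hv.2 i hi, hu.2 i hi]⟩

theorem inv_mem (hw : w ∈ SignedPerm n) : w⁻¹ ∈ SignedPerm n :=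
  ⟨fun i => w.injective (by simp only [Equiv.Perm.coe_inv, Equiv.apply_symm_apply, hw.1]),
    fun i hi => w.injective (by simp only [Equiv.Perm.coe_inv, Equiv.apply_symm_apply, hw.2 i hi])⟩

theorem apply_of_notMem (hw : w ∈ SignedPerm n) {i : ℤ} (hi : i ∉ Set.Icc (-(n : ℤ)) n) :
    w i = i :=
  hw.2 i (by rw [Set.mem_Icc, ← abs_le] at hi; omega)

theorem mapsTo (hw : w ∈ SignedPerm n) :
    Set.MapsTo w (Set.Icc (-(n : ℤ)) n) (Set.Icc (-(n : ℤ)) n) := by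
  intro i hi
  by_contra h
  have h' := apply_of_notMem (inv_mem hw) h
  rw [Equiv.Perm.coe_inv, Equiv.symm_apply_apply] at h'
  exact h (h' ▸ hi)

theorem abs_apply_injOn (hw : w ∈ SignedPerm n) {a b : ℤ} (ha : 0 ≤ a) (hb : 0 ≤ b)
    (h : |w a| = |w b|) : a = b := by
  rcases abs_eq_abs.1 h with h | h
  · exact w.injective h
  · rw [← hw.1] at h
    have := w.injective h
    omega

theorem abs_apply_le (hw : w ∈ SignedPerm n) {i : ℤ} (hi : |i| ≤ n) : |w i| ≤ n :=
  abs_le.2 (mapsTo hw (abs_le.1 hi))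

theorem abs_apply_le_of_forall_lt (hw : w ∈ SignedPerm n) {s : ℤ} (hs : |s| ≤ n)
    (h : ∀ t : ℤ, p < t → t ≤ n → |w s| < |w t|) : |w s| ≤ p := by
  by_contra hlt
  have hle := card_le_card_of_injOn (s := Ioc (p : ℤ) n) (t := Ioc |w s| n) (fun t => |w t|)
    (fun t ht => by
      simp only [coe_Ioc, Set.mem_Ioc] at ht ⊢
      exact ⟨h t ht.1 ht.2, abs_apply_le hw (by rw [abs_le]; omega)⟩)
    (fun t ht t' ht' htt' => by
      simp only [coe_Ioc, Set.mem_Ioc] at ht ht'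
      exact abs_apply_injOn hw (by omega) (by omega) htt')
  rw [Int.card_Ioc, Int.card_Ioc] at hle
  have := abs_apply_le hw hs
  omega

theorem lt_abs_apply_of_forall_lt (hw : w ∈ SignedPerm n) {t : ℤ}
    (h : ∀ s : ℤ, 0 ≤ s → s ≤ p → |w s| < |w t|) : p < |w t| := by
  have hle := card_le_card_of_injOn (s := Icc (0 : ℤ) p) (t := Ico 0 |w t|) (fun s => |w s|)
    (fun s hs => by
      simp only [coe_Icc, coe_Ico, Set.mem_Icc, Set.mem_Ico] at hs ⊢
      exact ⟨abs_nonneg _, h s hs.1 hs.2⟩)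
    (fun s hs s' hs' hss' => by
      simp only [coe_Icc, Set.mem_Icc] at hs hs'
      exact abs_apply_injOn hw hs.1 hs'.1 hss')
  rw [Int.card_Icc, Int.card_Ico] at hle
  omega

theorem add_apply_eq_zero_iff (hw : w ∈ SignedPerm n) {a b : ℤ} :
    w a + w b = 0 ↔ a + b = 0 := by
  rw [add_eq_zero_iff_eq_neg, add_eq_zero_iff_eq_neg, ← hw.1, w.injective.eq_iff]

theorem card_invPairs_pos (hw : w ∈ SignedPerm n) :
    #((invPairs n w).filter fun r => 0 < r.1 + r.2) = blen n w := by
  have hw0 := apply_zero hw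
  set P := (invPairs n w).filter fun r => 0 < r.1 + r.2
  have hInv : P.filter (fun r => 0 < r.1) = InvSet n w := by
    ext r
    simp only [P, invPairs, InvSet, mem_filter, mem_product, mem_Icc]
    omega
  have hNega : #((P.filter fun r => ¬ 0 < r.1).filter fun r => r.1 = 0) = #(NegaSet n w) := by
    refine card_nbij' (fun r => r.2) (fun i => (0, i)) ?_ ?_ (fun r hr => ?_) (fun i _ => rfl)
    · intro r hr
      simp only [P, invPairs, NegaSet, mem_coe, mem_filter, mem_product, mem_Icc] at hr ⊢
      rw [hr.2, hw0] at hr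
      omega
    · intro i hi
      simp only [P, invPairs, NegaSet, mem_coe, mem_filter, mem_product, mem_Icc, hw0,
        and_true] at hi ⊢
      omega
    · simp only [P, mem_coe, mem_filter] at hr
      exact Prod.ext hr.2.symm rfl
  have hNsp : #((P.filter fun r => ¬ 0 < r.1).filter fun r => ¬ r.1 = 0) = #(NspSet n w) := by
    refine card_nbij' (fun r => (-r.1, r.2)) (fun r => (-r.1, r.2)) ?_ ?_ (fun r _ => by simp)
      (fun r _ => by simp) <;> intro r hr <;>
      simp only [P, invPairs, NspSet, mem_coe, mem_filter, mem_product, mem_Icc, hw.1] at hr ⊢ <;>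
      omega
  have h1 := card_filter_add_card_filter_not (s := P) (fun r => 0 < r.1)
  have h2 := card_filter_add_card_filter_not (s := P.filter fun r => ¬ 0 < r.1) (fun r => r.1 = 0)
  rw [hInv] at h1
  rw [hNega, hNsp] at h2
  unfold blen
  omega

theorem card_invPairs (hw : w ∈ SignedPerm n) : #(invPairs n w) = 2 * blen n w := by
  have hflip : #((invPairs n w).filter fun r => ¬ 0 < r.1 + r.2) =
      #((invPairs n w).filter fun r => 0 < r.1 + r.2) := by
    refine card_nbij' (fun r => (-r.2, -r.1)) (fun r => (-r.2, -r.1)) ?_ ?_ (fun r _ => by simp)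
      (fun r _ => by simp) <;> intro r hr <;>
      simp only [invPairs, mem_coe, mem_filter, mem_product, mem_Icc, hw.1] at hr ⊢ <;>
      omega
  have := card_filter_add_card_filter_not (s := invPairs n w) (fun r => 0 < r.1 + r.2)
  rw [hflip, card_invPairs_pos hw] at this
  omega

/-- Relabelling positions by `u` matches the inversions of `v u⁻¹` with the pairs on which
`u` and `v` disagree. -/
theorem card_invPairs_mul_inv (hu : u ∈ SignedPerm n) :
    #(invPairs n (v * u⁻¹)) = #(invPairs n v \ invPairs n u) + #(invPairs n u \ invPairs n v) := by
  have hI : ∀ {w : Equiv.Perm ℤ}, w ∈ SignedPerm n → ∀ {a}, a ∈ Icc (-(n : ℤ)) n →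
      w a ∈ Icc (-(n : ℤ)) n := fun hw a ha => by
    simpa using mapsTo hw (by simpa using ha)
  set D := (Icc (-(n : ℤ)) n ×ˢ Icc (-(n : ℤ)) n).filter
    fun r => r.1 + r.2 ≠ 0 ∧ u r.1 < u r.2 ∧ v r.2 < v r.1 with hD
  have hrelabel : #(invPairs n (v * u⁻¹)) = #D := by
    refine card_nbij' (fun r => (u⁻¹ r.1, u⁻¹ r.2)) (fun r => (u r.1, u r.2)) ?_ ?_
      (fun r _ => by simp) (fun r _ => by simp) <;> intro r hr <;>
      simp only [invPairs, hD, mem_coe, mem_filter, mem_product] at hr ⊢ <;>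
      simp only [Equiv.Perm.mul_apply, Equiv.Perm.coe_inv, Equiv.apply_symm_apply,
        Equiv.symm_apply_apply] at hr ⊢
    · refine ⟨⟨hI (inv_mem hu) hr.1.1, hI (inv_mem hu) hr.1.2⟩,
        (add_apply_eq_zero_iff (inv_mem hu)).not.2 hr.2.2.1, hr.2.1, hr.2.2.2⟩
    · exact ⟨⟨hI hu hr.1.1, hI hu hr.1.2⟩, hr.2.2.1, (add_apply_eq_zero_iff hu).not.2 hr.2.1,
        hr.2.2.2⟩
  have hne : ∀ w : Equiv.Perm ℤ, ∀ r : ℤ × ℤ, w r.1 = w r.2 ↔ r.1 = r.2 :=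
    fun w r => w.injective.eq_iff
  have hforward : D.filter (fun r => r.1 < r.2) = invPairs n v \ invPairs n u := by
    ext r
    have := hne u r
    simp only [invPairs, hD, mem_filter, mem_sdiff, mem_product, mem_Icc]
    omega
  have hbackward : #(D.filter fun r => ¬ r.1 < r.2) = #(invPairs n u \ invPairs n v) := by
    refine card_nbij' Prod.swap Prod.swap ?_ ?_ (fun r _ => by simp) (fun r _ => by simp) <;>
      intro r hr <;> have := hne u r <;> have := hne v r <;>
      simp only [invPairs, hD, mem_coe, mem_filter, mem_sdiff, mem_product, mem_Icc,
        Prod.fst_swap, Prod.snd_swap] at hr ⊢ <;>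
      omega
  rw [hrelabel, ← card_filter_add_card_filter_not (s := D) (fun r => r.1 < r.2), hforward,
    hbackward]

theorem wle_iff_invPairs_subset (hu : u ∈ SignedPerm n) (hv : v ∈ SignedPerm n) :
    wle n u v ↔ invPairs n u ⊆ invPairs n v := by
  have hlen : wle n u v ↔ #(invPairs n v) = #(invPairs n u) + #(invPairs n (v * u⁻¹)) := by
    rw [wle, card_invPairs hu, card_invPairs hv, card_invPairs (mul_mem hv (inv_mem hu))]
    omega
  rw [hlen, card_invPairs_mul_inv hu, ← sdiff_eq_empty_iff_subset, ← card_eq_zero]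
  have hv' := card_sdiff_add_card_inter (invPairs n v) (invPairs n u)
  have hu' := card_sdiff_add_card_inter (invPairs n u) (invPairs n v)
  rw [inter_comm] at hv'
  omega

theorem wle_iff_invSubset (hu : u ∈ SignedPerm n) (hv : v ∈ SignedPerm n) :
    wle n u v ↔ InvSubset (Set.Icc (-(n : ℤ)) n) id u v := by
  rw [wle_iff_invPairs_subset hu hv]
  constructor
  · intro h a ha b hb hab hu'
    by_cases hsum : a + b = 0
    · -- the pair `(-b, b)` is an inversion exactly when `(0, b)` is
      obtain rfl : a = -b := by omega
      have h0 := h (show (0, b) ∈ invPairs n u by simp_all [invPairs, apply_zero hu, hu.1]; omega)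
      simp_all [invPairs, apply_zero hv, hv.1]
    · have := h (show (a, b) ∈ invPairs n u by simp_all [invPairs])
      simp_all [invPairs]
  · intro h r hr
    simp only [invPairs, mem_filter, mem_product, mem_Icc] at hr ⊢
    exact ⟨hr.1, hr.2.1, hr.2.2.1, h r.1 hr.1.1 r.2 hr.1.2 hr.2.1 hr.2.2.2⟩

theorem wle_mul_inv_iff (hu : u ∈ SignedPerm n) (hv : v ∈ SignedPerm n) (hσ : σ ∈ SignedPerm n) :
    wle n (u * σ⁻¹) (v * σ⁻¹) ↔ InvSubset (Set.Icc (-(n : ℤ)) n) σ u v := by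
  rw [wle_iff_invSubset (mul_mem hu (inv_mem hσ)) (mul_mem hv (inv_mem hσ))]
  constructor
  · intro h s hs t ht hst hut
    simpa using h (σ s) (mapsTo hσ hs) (σ t) (mapsTo hσ ht) hst (by simpa using hut)
  · intro h a ha b hb hab hut
    exact h _ (mapsTo (inv_mem hσ) ha) _ (mapsTo (inv_mem hσ) hb) (by simpa using hab) hut

theorem wle_trans (hu : u ∈ SignedPerm n) (hv : v ∈ SignedPerm n) (hw : w ∈ SignedPerm n)
    (huv : wle n u v) (hvw : wle n v w) : wle n u w :=
  (wle_iff_invSubset hu hw).2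
    (((wle_iff_invSubset hu hv).1 huv).trans ((wle_iff_invSubset hv hw).1 hvw))

theorem exists_eqOn (hodd : ∀ i ∈ Set.Icc (-(n : ℤ)) n, f (-i) = -f i)
    (hmaps : Set.MapsTo f (Set.Icc (-(n : ℤ)) n) (Set.Icc (-(n : ℤ)) n))
    (hinj : Set.InjOn f (Set.Icc (-(n : ℤ)) n)) :
    ∃ w ∈ SignedPerm n, Set.EqOn w f (Set.Icc (-(n : ℤ)) n) := by
  have hbij := ((Set.finite_Icc _ _).injOn_iff_bijOn_of_mapsTo hmaps).1 hinj
  set w := Equiv.Perm.ofSubtype (hbij.equiv f)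
  have hin : ∀ i ∈ Set.Icc (-(n : ℤ)) n, w i = f i := fun i hi =>
    Equiv.Perm.ofSubtype_apply_of_mem (hbij.equiv f) hi
  have hout : ∀ i ∉ Set.Icc (-(n : ℤ)) n, w i = i := fun i hi =>
    Equiv.Perm.ofSubtype_apply_of_not_mem (hbij.equiv f) hi
  refine ⟨w, ⟨fun i => ?_, fun i hi => hout i ?_⟩, hin⟩
  · by_cases hi : i ∈ Set.Icc (-(n : ℤ)) n
    · have hi' : -i ∈ Set.Icc (-(n : ℤ)) n := by simp only [Set.mem_Icc] at hi ⊢; omega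
      rw [hin i hi, hin _ hi', hodd i hi]
    · have hi' : -i ∉ Set.Icc (-(n : ℤ)) n := by simp only [Set.mem_Icc] at hi ⊢; omega
      rw [hout i hi, hout _ hi']
  · rw [Set.mem_Icc, ← abs_le]
    omega

theorem exists_lt_iff (hodd : ∀ i ∈ Set.Icc (-(n : ℤ)) n, f (-i) = -f i)
    (hinj : Set.InjOn f (Set.Icc (-(n : ℤ)) n)) :
    ∃ w ∈ SignedPerm n, ∀ s ∈ Set.Icc (-(n : ℤ)) n, ∀ t ∈ Set.Icc (-(n : ℤ)) n,
      w s < w t ↔ f s < f t := by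
  set I := Icc (-(n : ℤ)) n
  have hI : ∀ i, i ∈ I ↔ i ∈ Set.Icc (-(n : ℤ)) n := fun i => by simp [I]
  have hinj' : Set.InjOn f I := fun s hs t ht => hinj ((hI s).1 hs) ((hI t).1 ht)
  have hcard : #I = 2 * n + 1 := by rw [Int.card_Icc]; omega
  -- the letters below `f (-s)` are the negatives of those above `f s`
  have hflip : ∀ s ∈ I, #(I.filter fun t => f t < f (-s)) = #(I.filter fun t => f s < f t) := by
    intro s hs
    rw [hodd s ((hI s).1 hs)]
    apply card_nbij' Neg.neg Neg.neg <;> intro t ht <;>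
      simp only [mem_coe, mem_filter, I, mem_Icc, neg_neg] at ht ⊢
    · have := hodd t (by simp only [Set.mem_Icc]; omega)
      omega
    · have := hodd (-t) (by simp only [Set.mem_Icc]; omega)
      rw [neg_neg] at this
      omega
  set rank : ℤ → ℤ := fun s => #(I.filter fun t => f t < f s) - n
  have hrank : ClassMonoOn (Set.Icc (-(n : ℤ)) n) f rank := fun s hs t _ hst => by
    have := card_filter_lt_lt_card_filter_lt ((hI s).2 hs) hst
    simp only [rank]
    omega
  obtain ⟨w, hw, hwr⟩ := exists_eqOn (f := rank)
    (fun s hs => by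
      have h1 := card_filter_lt_add_card_filter_gt hinj' ((hI s).2 hs)
      have h2 := hflip s ((hI s).2 hs)
      simp only [rank]
      omega)
    (fun s hs => by
      have := card_filter_lt_add_card_filter_gt hinj' ((hI s).2 hs)
      simp only [rank, Set.mem_Icc]
      omega)
    (hrank.injOn hinj)
  exact ⟨w, hw, fun s hs t ht => by rw [hwr hs, hwr ht, hrank.lt_iff_lt hinj hs ht]⟩

theorem exists_lt_iff_lex (hW : W ∈ SignedPerm n) (hc_neg : ∀ t, c (-t) = -c t)
    (hc : ∀ t, c t = 0 ∨ c t = 1 ∨ c t = -1) :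
    ∃ w ∈ SignedPerm n, ∀ s ∈ Set.Icc (-(n : ℤ)) n, ∀ t ∈ Set.Icc (-(n : ℤ)) n,
      w s < w t ↔ c s < c t ∨ c s = c t ∧ W s < W t := by
  -- a weight beyond the spread `2n` of the values of `W` makes the class dominant
  have key : ∀ s ∈ Set.Icc (-(n : ℤ)) n, ∀ t ∈ Set.Icc (-(n : ℤ)) n,
      (W s + (2 * n + 1) * c s < W t + (2 * n + 1) * c t ↔ c s < c t ∨ c s = c t ∧ W s < W t) ∧
      (W s + (2 * n + 1) * c s = W t + (2 * n + 1) * c t → s = t) := by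
    intro s hs t ht
    have hWs := mapsTo hW hs
    have hWt := mapsTo hW ht
    simp only [Set.mem_Icc] at hWs hWt
    have hinj : W s = W t → s = t := fun h => W.injective h
    rcases hc s with hcs | hcs | hcs <;> rcases hc t with hct | hct | hct <;>
      rw [hcs, hct] <;> constructor <;> omega
  obtain ⟨w, hw, hlt⟩ := exists_lt_iff (f := fun s => W s + (2 * n + 1) * c s)
    (fun i _ => by rw [hW.1, hc_neg]; ring)
    (fun s hs t ht h => (key s hs t ht).2 h)
  exact ⟨w, hw, fun s hs t ht => (hlt s hs t ht).trans (key s hs t ht).1⟩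

end SignedPerm

def unshift (p : ℕ) (b : ℤ) : ℤ :=
  if 0 < b then b - p else if b < 0 then b + p else 0

section Shift

variable {p : ℕ}

theorem shiftFun_neg (b : ℤ) : shiftFun p (-b) = -shiftFun p b := by
  unfold shiftFun; split_ifs <;> omega

theorem unshift_neg (b : ℤ) : unshift p (-b) = -unshift p b := by
  unfold unshift; split_ifs <;> omega

theorem unshift_shiftFun (b : ℤ) : unshift p (shiftFun p b) = b := by
  unfold unshift shiftFun; split_ifs <;> omega

theorem shiftFun_unshift {b : ℤ} (hb : (p : ℤ) < b ∨ b < -p ∨ b = 0) :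
    shiftFun p (unshift p b) = b := by
  unfold unshift shiftFun; split_ifs <;> omega

end Shift

theorem IsShuffle.lt_of_lt {p q : ℕ} {ξ : Equiv.Perm ℤ} (hξ : IsShuffle p q ξ) {s t : ℤ}
    (hs : -((p + q : ℕ) : ℤ) ≤ s) (ht : t ≤ ((p + q : ℕ) : ℤ)) (hst : s < t)
    (hblock : -(p : ℤ) ≤ s ∧ s ≤ p ↔ -(p : ℤ) ≤ t ∧ t ≤ p) : ξ s < ξ t := by
  have h0 := SignedPerm.apply_zero hξ.1
  obtain ⟨⟨hodd, -⟩, hpos, hsmall, hbig⟩ := hξ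
  have hpos_lt : ∀ a b : ℤ, 0 < a → a < b → b ≤ (p : ℤ) + q → (a ≤ p ↔ b ≤ p) → ξ a < ξ b :=
    fun a b ha hab hb hab' => by
      by_cases hbp : b ≤ p
      · exact hsmall a b ha hab hbp
      · exact hbig a b (by omega) hab hb
  rcases lt_or_ge 0 s with hs0 | hs0
  · exact hpos_lt s t hs0 hst (by omega) (by omega)
  rcases lt_or_ge t 0 with ht0 | ht0
  · have := hpos_lt (-t) (-s) (by omega) (by omega) (by omega) (by omega)
    rw [hodd, hodd] at this
    omega
  rcases eq_or_lt_of_le hs0 with rfl | hs0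
  · rw [h0]
    exact hpos t (by omega) (by omega)
  · have := hpos (-s) (by omega) (by omega)
    rw [hodd] at this
    rcases eq_or_lt_of_le ht0 with rfl | ht0
    · omega
    · have := hpos t (by omega) (by omega)
      omega

/-- The sign of `w t` shared by all `w ∈ 𝔅_p × 𝔅_{q,K}`, and `0` on the block `[-p, p]`. -/
def blockClass (p : ℕ) (K : Finset ℤ) (t : ℤ) : ℤ :=
  if -(p : ℤ) ≤ t ∧ t ≤ p then 0
  else if 0 < t then (if t - p ∈ K then -1 else 1)
  else (if -t - p ∈ K then 1 else -1)

def IsBlockValue (p : ℕ) (k x : ℤ) : Prop :=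
  k = 0 ∧ -(p : ℤ) ≤ x ∧ x ≤ p ∨ k = 1 ∧ (p : ℤ) < x ∨ k = -1 ∧ x < -p

section Component

variable {p q : ℕ} {K : Finset ℤ} {w : Equiv.Perm ℤ}

theorem signedPerm_of_mem_SProdComp (hw : w ∈ SProdComp p q K) : w ∈ SignedPerm (p + q) := by
  obtain ⟨-, -, -, -, -, hw, -⟩ := hw
  exact hw

theorem blockClass_neg (t : ℤ) : blockClass p K (-t) = -blockClass p K t := by
  unfold blockClass
  split_ifs <;> first | omega | simp_all

theorem blockClass_eq_zero_iff {t : ℤ} : blockClass p K t = 0 ↔ -(p : ℤ) ≤ t ∧ t ≤ p := by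
  unfold blockClass
  split_ifs <;> simp_all

theorem blockClass_of_lt {t : ℤ} (ht : (p : ℤ) < t) :
    blockClass p K t = if t - p ∈ K then -1 else 1 := by
  unfold blockClass
  rw [if_neg (by omega), if_pos (by omega)]

theorem blockClass_cases (t : ℤ) :
    blockClass p K t = 0 ∨ blockClass p K t = 1 ∨ blockClass p K t = -1 := by
  unfold blockClass
  split_ifs <;> simp

theorem isBlockValue_neg {k x : ℤ} : IsBlockValue p (-k) (-x) ↔ IsBlockValue p k x := by
  unfold IsBlockValue
  omega

theorem forall_isBlockValue_of_nonneg {n : ℕ} (hw : w ∈ SignedPerm n)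
    (h : ∀ s : ℤ, 0 ≤ s → s ≤ n → IsBlockValue p (blockClass p K s) (w s)) :
    ∀ s ∈ Set.Icc (-(n : ℤ)) n, IsBlockValue p (blockClass p K s) (w s) := by
  intro s ⟨hs, hs'⟩
  rcases le_or_gt 0 s with h0 | h0
  · exact h s h0 hs'
  · have := h (-s) (by omega) (by omega)
    rwa [blockClass_neg, hw.1, isBlockValue_neg] at this

theorem isBlockValue_of_mem (hw : w ∈ SProdComp p q K) :
    ∀ s ∈ Set.Icc (-((p + q : ℕ) : ℤ)) (p + q : ℕ), IsBlockValue p (blockClass p K s) (w s) := by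
  obtain ⟨u, v, hu, hv, rfl, hw, hwu, hwv⟩ := hw
  apply forall_isBlockValue_of_nonneg hw
  intro s hs0 hsn
  rcases eq_or_lt_of_le hs0 with rfl | hs0
  · rw [SignedPerm.apply_zero hw]
    exact Or.inl ⟨blockClass_eq_zero_iff.2 (by omega), by omega, by omega⟩
  by_cases hsp : s ≤ p
  · have := SignedPerm.mapsTo hu (show s ∈ Set.Icc (-(p : ℤ)) p by simp only [Set.mem_Icc]; omega)
    rw [hwu s hs0 hsp]
    exact Or.inl ⟨blockClass_eq_zero_iff.2 (by omega), this⟩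
  · have hb := SignedPerm.mapsTo hv (show s - p ∈ Set.Icc (-(q : ℤ)) q by
      simp only [Set.mem_Icc]; omega)
    have hb0 : v (s - p) ≠ 0 := by
      rw [← SignedPerm.apply_zero hv, v.injective.ne_iff]
      omega
    have hneg : s - p ∈ NegaSet q v ↔ v (s - p) < 0 := by
      simp only [NegaSet, mem_filter, mem_Icc]
      omega
    rw [hwv s (by omega) (by omega), blockClass_of_lt (by omega)]
    simp only [hneg, IsBlockValue, shiftFun]
    split_ifs <;> omega

theorem classMonoOn_of_isBlockValue (R : Set ℤ)
    (h : ∀ s ∈ R, IsBlockValue p (blockClass p K s) (w s)) : ClassMonoOn R (blockClass p K) w := by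
  intro s hs t ht hst
  have := h s hs
  have := h t ht
  unfold IsBlockValue at *
  omega

theorem abs_lt_abs_of_classMonoOn {n : ℕ} (hw : w ∈ SignedPerm n)
    (h : ClassMonoOn (Set.Icc (-(n : ℤ)) n) (blockClass p K) w) {s t : ℤ}
    (hs : -(p : ℤ) ≤ s ∧ s ≤ p) (hsR : s ∈ Set.Icc (-(n : ℤ)) n) (ht : (p : ℤ) < |t|)
    (htR : t ∈ Set.Icc (-(n : ℤ)) n) : |w s| < |w t| := by
  have hsR' : -s ∈ Set.Icc (-(n : ℤ)) n := ⟨by linarith [hsR.2], by linarith [hsR.1]⟩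
  have hs0 : blockClass p K s = 0 := blockClass_eq_zero_iff.2 hs
  have hs0' : blockClass p K (-s) = 0 := by rw [blockClass_neg, hs0, neg_zero]
  have ht0 : blockClass p K t ≠ 0 := by
    rw [Ne, blockClass_eq_zero_iff, ← abs_le]
    omega
  rw [abs_lt]
  rcases lt_or_gt_of_ne ht0 with hneg | hpos
  · have h1 := h t htR s hsR (hneg.trans_eq hs0.symm)
    have h2 := h t htR (-s) hsR' (hneg.trans_eq hs0'.symm)
    rw [hw.1] at h2
    have := neg_abs_le (w t)
    constructor <;> linarith
  · have h1 := h s hsR t htR (hs0.trans_lt hpos)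
    have h2 := h (-s) hsR' t htR (hs0'.trans_lt hpos)
    rw [hw.1] at h2
    have := le_abs_self (w t)
    constructor <;> linarith

theorem isBlockValue_of_classMonoOn (hw : w ∈ SignedPerm (p + q))
    (h : ClassMonoOn (Set.Icc (-((p + q : ℕ) : ℤ)) (p + q : ℕ)) (blockClass p K) w) :
    ∀ s ∈ Set.Icc (-((p + q : ℕ) : ℤ)) (p + q : ℕ), IsBlockValue p (blockClass p K s) (w s) := by
  have hR : ∀ s, -(p : ℤ) ≤ s → s ≤ p + q → s ∈ Set.Icc (-((p + q : ℕ) : ℤ)) (p + q : ℕ) :=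
    fun s h1 h2 => by simp only [Set.mem_Icc]; omega
  intro s hsR
  by_cases hs : -(p : ℤ) ≤ s ∧ s ≤ p
  · have := SignedPerm.abs_apply_le_of_forall_lt (p := p) hw (abs_le.2 hsR) fun t ht ht' =>
      abs_lt_abs_of_classMonoOn hw h hs hsR (by rw [lt_abs]; omega) (hR t (by omega) ht')
    exact Or.inl ⟨blockClass_eq_zero_iff.2 hs, abs_le.1 this⟩
  have hgt := SignedPerm.lt_abs_apply_of_forall_lt hw fun s' hs' hs'' =>
    abs_lt_abs_of_classMonoOn hw h ⟨by omega, hs''⟩ (hR s' (by omega) (by omega))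
      (by rw [lt_abs]; omega) hsR
  have h0R := hR 0 (by omega) (by omega)
  have hc0 : blockClass p K 0 = 0 := blockClass_eq_zero_iff.2 ⟨by omega, by omega⟩
  have hw0 := SignedPerm.apply_zero hw
  rw [lt_abs] at hgt
  rcases blockClass_cases (p := p) (K := K) s with hc | hc | hc
  · exact absurd (blockClass_eq_zero_iff.1 hc) hs
  · have := h 0 h0R s hsR (by rw [hc0, hc]; norm_num)
    exact Or.inr (Or.inl ⟨hc, by omega⟩)
  · have := h s hsR 0 h0R (by rw [hc0, hc]; norm_num)
    exact Or.inr (Or.inr ⟨hc, by omega⟩)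

theorem exists_left_factor (hw : w ∈ SignedPerm (p + q))
    (h : ∀ s ∈ Set.Icc (-((p + q : ℕ) : ℤ)) (p + q : ℕ), IsBlockValue p (blockClass p K s) (w s)) :
    ∃ u ∈ SignedPerm p, ∀ a : ℤ, 1 ≤ a → a ≤ p → w a = u a := by
  obtain ⟨u, hu, hwu⟩ := SignedPerm.exists_eqOn (n := p) (f := w) (fun i _ => hw.1 i)
    (fun s ⟨hs, hs'⟩ => by
      have := (blockClass_eq_zero_iff (K := K)).2 ⟨hs, hs'⟩
      rcases h s ⟨by omega, by omega⟩ with ⟨-, hws⟩ | ⟨hc, -⟩ | ⟨hc, -⟩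
      · exact hws
      all_goals omega)
    w.injective.injOn
  exact ⟨u, hu, fun a ha ha' => (hwu ⟨by omega, ha'⟩).symm⟩

theorem apply_shiftFun_mem (hw : w ∈ SignedPerm (p + q))
    (h : ∀ s ∈ Set.Icc (-((p + q : ℕ) : ℤ)) (p + q : ℕ), IsBlockValue p (blockClass p K s) (w s))
    {i : ℤ} (hi : -(q : ℤ) ≤ i) (hi' : i ≤ q) :
    (w (shiftFun p i) = 0 ∨ (p : ℤ) < w (shiftFun p i) ∨ w (shiftFun p i) < -p) ∧
      -((p : ℤ) + q) ≤ w (shiftFun p i) ∧ w (shiftFun p i) ≤ p + q := by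
  have hshift : shiftFun p i ∈ Set.Icc (-((p + q : ℕ) : ℤ)) (p + q : ℕ) ∧
      (i = 0 → shiftFun p i = 0) ∧ (i ≠ 0 → ¬ (-(p : ℤ) ≤ shiftFun p i ∧ shiftFun p i ≤ p)) := by
    simp only [Set.mem_Icc]
    unfold shiftFun
    split_ifs <;> omega
  have hmem := SignedPerm.mapsTo hw hshift.1
  simp only [Set.mem_Icc] at hmem
  refine ⟨?_, by omega, by omega⟩
  by_cases hi0 : i = 0
  · rw [hshift.2.1 hi0, SignedPerm.apply_zero hw]
    exact Or.inl rfl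
  · have hc := mt (blockClass_eq_zero_iff (K := K)).1 (hshift.2.2 hi0)
    rcases h _ hshift.1 with ⟨hc', -⟩ | ⟨-, h'⟩ | ⟨-, h'⟩
    · exact absurd hc' hc
    · exact Or.inr (Or.inl h')
    · exact Or.inr (Or.inr h')

theorem exists_right_factor (hK : K ⊆ Icc (1 : ℤ) q) (hw : w ∈ SignedPerm (p + q))
    (h : ∀ s ∈ Set.Icc (-((p + q : ℕ) : ℤ)) (p + q : ℕ), IsBlockValue p (blockClass p K s) (w s)) :
    ∃ v ∈ SignedPerm q, NegaSet q v = K ∧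
      ∀ a : ℤ, p < a → a ≤ p + q → w a = shiftFun p (v (a - p)) := by
  set g : ℤ → ℤ := fun i => unshift p (w (shiftFun p i))
  have hg : ∀ i : ℤ, -(q : ℤ) ≤ i → i ≤ q → shiftFun p (g i) = w (shiftFun p i) := fun i hi hi' =>
    shiftFun_unshift (by have := (apply_shiftFun_mem hw h hi hi').1; omega)
  obtain ⟨v, hv, hvg⟩ := SignedPerm.exists_eqOn (n := q) (f := g)
    (fun i _ => by simp only [g, shiftFun_neg, hw.1, unshift_neg])
    (fun i ⟨hi, hi'⟩ => by
      have := apply_shiftFun_mem hw h hi hi'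
      simp only [g, Set.mem_Icc]
      unfold unshift
      split_ifs <;> omega)
    (fun i ⟨hi, hi'⟩ j ⟨hj, hj'⟩ hij => by
      have := hg i hi hi'
      rw [hij, hg j hj hj', w.injective.eq_iff] at this
      rw [← unshift_shiftFun (p := p) i, ← this, unshift_shiftFun])
  have hsign : ∀ k : ℤ, 1 ≤ k → k ≤ q → (v k < 0 ↔ k ∈ K) := by
    intro k hk hk'
    have hval := h (k + p) ⟨by omega, by omega⟩
    rw [blockClass_of_lt (by omega), add_sub_cancel_right] at hval
    rw [hvg ⟨by omega, hk'⟩]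
    change unshift p (w (shiftFun p k)) < 0 ↔ k ∈ K
    rw [show shiftFun p k = k + p by unfold shiftFun; split_ifs <;> omega]
    unfold unshift
    by_cases hkK : k ∈ K <;>
      simp only [hkK, IsBlockValue, ↓reduceIte, iff_true, iff_false] at hval ⊢ <;>
      split_ifs <;> omega
  refine ⟨v, hv, ?_, fun a ha ha' => ?_⟩
  · ext k
    simp only [NegaSet, mem_filter, mem_Icc]
    exact ⟨fun ⟨⟨hk, hk'⟩, hvk⟩ => (hsign k hk hk').1 hvk,
      fun hk => ⟨mem_Icc.1 (hK hk), (hsign k (mem_Icc.1 (hK hk)).1 (mem_Icc.1 (hK hk)).2).2 hk⟩⟩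
  · rw [hvg ⟨by omega, by omega⟩, hg _ (by omega) (by omega),
      show shiftFun p (a - p) = a by unfold shiftFun; split_ifs <;> omega]

theorem mem_of_isBlockValue (hK : K ⊆ Icc (1 : ℤ) q) (hw : w ∈ SignedPerm (p + q))
    (h : ∀ s ∈ Set.Icc (-((p + q : ℕ) : ℤ)) (p + q : ℕ), IsBlockValue p (blockClass p K s) (w s)) :
    w ∈ SProdComp p q K :=
  let ⟨u, hu, hwu⟩ := exists_left_factor hw h
  let ⟨v, hv, hvK, hwv⟩ := exists_right_factor hK hw h
  ⟨u, v, hu, hv, hvK, hw, hwu, hwv⟩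

theorem mem_SProdComp_iff (hK : K ⊆ Icc (1 : ℤ) q) :
    w ∈ SProdComp p q K ↔ w ∈ SignedPerm (p + q) ∧
      ClassMonoOn (Set.Icc (-((p + q : ℕ) : ℤ)) (p + q : ℕ)) (blockClass p K) w :=
  ⟨fun hw => ⟨signedPerm_of_mem_SProdComp hw,
    classMonoOn_of_isBlockValue _ (isBlockValue_of_mem hw)⟩,
    fun ⟨hw, h⟩ => mem_of_isBlockValue hK hw (isBlockValue_of_classMonoOn hw h)⟩

end Component

section Embedding

variable {p q : ℕ} {ξ : Equiv.Perm ℤ} {K : Finset ℤ} {a b c x y z m : Equiv.Perm ℤ}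

theorem IsShuffle.lt_of_blockClass_eq (hξ : IsShuffle p q ξ) {s t : ℤ}
    (hs : s ∈ Set.Icc (-((p + q : ℕ) : ℤ)) (p + q : ℕ))
    (ht : t ∈ Set.Icc (-((p + q : ℕ) : ℤ)) (p + q : ℕ))
    (hc : blockClass p K s = blockClass p K t) (hst : s < t) : ξ s < ξ t :=
  hξ.lt_of_lt hs.1 ht.2 hst (by rw [← blockClass_eq_zero_iff (K := K), hc, blockClass_eq_zero_iff])

theorem mul_inv_mem (hξ : IsShuffle p q ξ) (ha : a ∈ SProdComp p q K) :
    a * ξ⁻¹ ∈ SignedPerm (p + q) :=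
  SignedPerm.mul_mem (signedPerm_of_mem_SProdComp ha) (SignedPerm.inv_mem hξ.1)

theorem wle_iff_wle_mul_inv (hξ : IsShuffle p q ξ) (hK : K ⊆ Icc (1 : ℤ) q)
    (ha : a ∈ SProdComp p q K) (hb : b ∈ SProdComp p q K) :
    wle (p + q) a b ↔ wle (p + q) (a * ξ⁻¹) (b * ξ⁻¹) := by
  obtain ⟨ha, hca⟩ := (mem_SProdComp_iff hK).1 ha
  obtain ⟨hb, hcb⟩ := (mem_SProdComp_iff hK).1 hb
  rw [SignedPerm.wle_iff_invSubset ha hb, SignedPerm.wle_mul_inv_iff ha hb hξ.1]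
  constructor
  · refine InvSubset.of_classMonoOn hca hcb fun s hs t ht hc hst => ?_
    by_contra hts
    rcases (not_lt.1 hts).lt_or_eq with hts | rfl
    · exact lt_asymm hst (hξ.lt_of_blockClass_eq ht hs hc.symm hts)
    · exact lt_irrefl _ hst
  · exact InvSubset.of_classMonoOn hca hcb fun s hs t ht hc hst =>
      hξ.lt_of_blockClass_eq hs ht hc hst

theorem mul_mem_of_wle_of_wle (hξ : IsShuffle p q ξ) (hK : K ⊆ Icc (1 : ℤ) q)
    (ha : a ∈ SProdComp p q K) (hc : c ∈ SProdComp p q K) (hx : x ∈ SignedPerm (p + q))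
    (h₁ : wle (p + q) (a * ξ⁻¹) x) (h₂ : wle (p + q) x (c * ξ⁻¹)) : x * ξ ∈ SProdComp p q K := by
  obtain ⟨ha, hca⟩ := (mem_SProdComp_iff hK).1 ha
  obtain ⟨hc, hcc⟩ := (mem_SProdComp_iff hK).1 hc
  have hxξ := SignedPerm.mul_mem hx hξ.1
  rw [← mul_inv_cancel_right x ξ, SignedPerm.wle_mul_inv_iff ha hxξ hξ.1] at h₁
  rw [← mul_inv_cancel_right x ξ, SignedPerm.wle_mul_inv_iff hxξ hc hξ.1] at h₂
  exact (mem_SProdComp_iff hK).2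
    ⟨hxξ, ClassMonoOn.of_invSubset hca hcc ξ.injective.injOn (x * ξ).injective.injOn h₁ h₂⟩

/-- The projection `zd` orders positions first by `blockClass`, then by the values of `z ξ`. -/
theorem exists_projection (hξ : IsShuffle p q ξ) (hK : K ⊆ Icc (1 : ℤ) q)
    (hz : z ∈ SignedPerm (p + q)) :
    ∃ zd ∈ SProdComp p q K, ∀ x ∈ SProdComp p q K,
      (wle (p + q) z (x * ξ⁻¹) → wle (p + q) z (zd * ξ⁻¹) ∧ wle (p + q) zd x) ∧
      (wle (p + q) (x * ξ⁻¹) z → wle (p + q) (zd * ξ⁻¹) z ∧ wle (p + q) x zd) := by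
  have hW := SignedPerm.mul_mem hz hξ.1
  obtain ⟨zd, hzd, hlex⟩ := SignedPerm.exists_lt_iff_lex hW (blockClass_neg (p := p) (K := K))
    blockClass_cases
  have hzdS : zd ∈ SProdComp p q K :=
    (mem_SProdComp_iff hK).2 ⟨hzd, fun s hs t ht hst => (hlex s hs t ht).2 (Or.inl hst)⟩
  refine ⟨zd, hzdS, fun x hx => ?_⟩
  obtain ⟨hx', hcx⟩ := (mem_SProdComp_iff hK).1 hx
  rw [← mul_inv_cancel_right z ξ, SignedPerm.wle_mul_inv_iff hW hx' hξ.1,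
    SignedPerm.wle_mul_inv_iff hW hzd hξ.1, SignedPerm.wle_mul_inv_iff hx' hW hξ.1,
    SignedPerm.wle_mul_inv_iff hzd hW hξ.1, wle_iff_wle_mul_inv hξ hK hzdS hx,
    wle_iff_wle_mul_inv hξ hK hx hzdS, SignedPerm.wle_mul_inv_iff hzd hx' hξ.1,
    SignedPerm.wle_mul_inv_iff hx' hzd hξ.1]
  exact ⟨InvSubset.lex_of_le hlex hcx, InvSubset.lex_of_ge hlex hcx⟩

theorem isMeetIn_mul_inv (hξ : IsShuffle p q ξ) (hK : K ⊆ Icc (1 : ℤ) q)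
    (hx : x ∈ SProdComp p q K) (hy : y ∈ SProdComp p q K)
    (hm : IsMeetIn (p + q) (SProdComp p q K) x y m) :
    IsMeetIn (p + q) (SignedPerm (p + q)) (x * ξ⁻¹) (y * ξ⁻¹) (m * ξ⁻¹) := by
  obtain ⟨hmS, hmx, hmy, hmax⟩ := hm
  refine ⟨mul_inv_mem hξ hmS, (wle_iff_wle_mul_inv hξ hK hmS hx).1 hmx,
    (wle_iff_wle_mul_inv hξ hK hmS hy).1 hmy, fun z hz hzx hzy => ?_⟩
  obtain ⟨zd, hzd, hproj⟩ := exists_projection hξ hK hz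
  obtain ⟨hz_zd, hzd_x⟩ := (hproj x hx).1 hzx
  have hzd_m := hmax zd hzd hzd_x ((hproj y hy).1 hzy).2
  exact SignedPerm.wle_trans hz (mul_inv_mem hξ hzd) (mul_inv_mem hξ hmS) hz_zd
    ((wle_iff_wle_mul_inv hξ hK hzd hmS).1 hzd_m)

theorem isJoinIn_mul_inv (hξ : IsShuffle p q ξ) (hK : K ⊆ Icc (1 : ℤ) q)
    (hx : x ∈ SProdComp p q K) (hy : y ∈ SProdComp p q K)
    (hj : IsJoinIn (p + q) (SProdComp p q K) x y m) :
    IsJoinIn (p + q) (SignedPerm (p + q)) (x * ξ⁻¹) (y * ξ⁻¹) (m * ξ⁻¹) := by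
  obtain ⟨hmS, hxm, hym, hmin⟩ := hj
  refine ⟨mul_inv_mem hξ hmS, (wle_iff_wle_mul_inv hξ hK hx hmS).1 hxm,
    (wle_iff_wle_mul_inv hξ hK hy hmS).1 hym, fun z hz hxz hyz => ?_⟩
  obtain ⟨zd, hzd, hproj⟩ := exists_projection hξ hK hz
  obtain ⟨hzd_z, hx_zd⟩ := (hproj x hx).2 hxz
  have hm_zd := hmin zd hzd hx_zd ((hproj y hy).2 hyz).2
  exact SignedPerm.wle_trans (mul_inv_mem hξ hmS) (mul_inv_mem hξ hzd) hz
    ((wle_iff_wle_mul_inv hξ hK hmS hzd).1 hm_zd) hzd_z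

end Embedding

/-- For any `(p,q)`-shuffle `ξ` and `K ⊆ [q]`, the map
`τ_ξ : w ↦ w ξ⁻¹` is a convex embedding of `𝔅_p × 𝔅_{q,K}` into `𝔅_{p+q}`
(weak orders); in particular it preserves all meets and joins that exist. -/
theorem tau_convex_embedding (p q : ℕ) (ξ : Equiv.Perm ℤ) (hξ : IsShuffle p q ξ)
    (K : Finset ℤ) (hK : K ⊆ Finset.Icc (1 : ℤ) (q : ℤ)) :
    Set.InjOn (fun w => w * ξ⁻¹) (SProdComp p q K) ∧
    (∀ a ∈ SProdComp p q K, ∀ b ∈ SProdComp p q K,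
      (wle (p + q) a b ↔ wle (p + q) (a * ξ⁻¹) (b * ξ⁻¹))) ∧
    (∀ a ∈ SProdComp p q K, ∀ c ∈ SProdComp p q K, ∀ x ∈ SignedPerm (p + q),
      wle (p + q) (a * ξ⁻¹) x → wle (p + q) x (c * ξ⁻¹) →
        ∃ b ∈ SProdComp p q K, x = b * ξ⁻¹) ∧
    (∀ x ∈ SProdComp p q K, ∀ y ∈ SProdComp p q K, ∀ m,
      IsMeetIn (p + q) (SProdComp p q K) x y m →
      IsMeetIn (p + q) (SignedPerm (p + q)) (x * ξ⁻¹) (y * ξ⁻¹) (m * ξ⁻¹)) ∧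
    (∀ x ∈ SProdComp p q K, ∀ y ∈ SProdComp p q K, ∀ j,
      IsJoinIn (p + q) (SProdComp p q K) x y j →
      IsJoinIn (p + q) (SignedPerm (p + q)) (x * ξ⁻¹) (y * ξ⁻¹) (j * ξ⁻¹)) :=
  ⟨fun _ _ _ _ h => mul_right_cancel h,
    fun _ ha _ hb => wle_iff_wle_mul_inv hξ hK ha hb,
    fun _ ha _ hc x hx h₁ h₂ =>
      ⟨x * ξ, mul_mem_of_wle_of_wle hξ hK ha hc hx h₁ h₂, (mul_inv_cancel_right x ξ).symm⟩,
    fun _ hx _ hy _ hm => isMeetIn_mul_inv hξ hK hx hy hm,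
    fun _ hx _ hy _ hj => isJoinIn_mul_inv hξ hK hx hy hj⟩
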